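/- Let λ₁ ≥ λ₂ ≥ ⋯ ≥ λ_d > 0 with sum S and product P, and let 1 ≤ k ≤ l ≤ d−2. Then λ_k λ_{k+1} ⋯ λ_l ≤ ( (1/P) · ( (1/(d−l)) · (S/(l+1))^(l+1) )^(d−l) )^((l−k+1)/(l(d−l−1))). -/

import Mathlib

open Finset Real

/-!
Write `A` for the product of the `l` largest terms and `B` for the product of the remaining
`n = d - l` ones, so that `P = A * B`. The block `λ_k ⋯ λ_l` consists of the `l - k + 1` smallest
of the `l` largest terms, so its `l`-th power is at most `A ^ (l - k + 1)`. On the other hand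
AM-GM applied to each group, and then once more to `l` copies of the mean of the first group
together with the sum of the second, gives `A ^ n * B ≤ ((S / (l + 1)) ^ (l + 1) / n) ^ n`,
i.e. `A ^ (n - 1) ≤ ((S / (l + 1)) ^ (l + 1) / n) ^ n / P`. Combining the two bounds and taking
the `l (n - 1)`-th root gives the claim.
-/

theorem prod_le_sum_div_card_pow {ι : Type*} (s : Finset ι) {f : ι → ℝ}
    (hf : ∀ i ∈ s, 0 ≤ f i) : ∏ i ∈ s, f i ≤ ((∑ i ∈ s, f i) / #s) ^ #s := by
  rcases s.eq_empty_or_nonempty with rfl | hs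
  · simp
  have hcard : (0 : ℝ) < #s := by exact_mod_cast hs.card_pos
  have h := geom_mean_le_arith_mean_weighted s (fun _ => (#s : ℝ)⁻¹) f
    (fun _ _ => by positivity) (by simp [hcard.ne']) hf
  rw [finsetProd_rpow s f hf, ← mul_sum, inv_mul_eq_div] at h
  calc ∏ i ∈ s, f i = ((∏ i ∈ s, f i) ^ (#s : ℝ)⁻¹) ^ #s :=
        (rpow_inv_natCast_pow (prod_nonneg hf) hs.card_pos.ne').symm
    _ ≤ ((∑ i ∈ s, f i) / #s) ^ #s := pow_le_pow_left₀ (rpow_nonneg (prod_nonneg hf) _) h _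

theorem pow_mul_le_add_div_pow {u v : ℝ} (hu : 0 ≤ u) (hv : 0 ≤ v) (l : ℕ) :
    u ^ l * v ≤ ((l * u + v) / (l + 1)) ^ (l + 1) := by
  have h := prod_le_sum_div_card_pow (range (l + 1)) (f := fun i => if i < l then u else v)
    (fun i _ => by split_ifs <;> assumption)
  have hlt : ∀ i ∈ range l, i < l := fun i => mem_range.1
  simpa [prod_range_succ, sum_range_succ, prod_ite_of_true hlt, sum_ite_of_true hlt] using h

theorem prod_range_pow_mul_prod_Ico_le {f : ℕ → ℝ} {l n : ℕ} (hf : ∀ i < l + n, 0 ≤ f i) :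
    (∏ i ∈ range l, f i) ^ n * ∏ i ∈ Ico l (l + n), f i ≤
      (((∑ i ∈ range (l + n), f i) / (l + 1)) ^ (l + 1) / n) ^ n := by
  set t := ∑ i ∈ range l, f i
  set u := ∑ i ∈ Ico l (l + n), f i
  have hA : ∏ i ∈ range l, f i ≤ (t / l) ^ l := by
    simpa using prod_le_sum_div_card_pow (range l) fun i hi => hf i (by simp at hi; omega)
  have hB : ∏ i ∈ Ico l (l + n), f i ≤ (u / n) ^ n := by
    simpa using prod_le_sum_div_card_pow (Ico l (l + n)) fun i hi => hf i (by simp at hi; omega)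
  have ht : 0 ≤ t := sum_nonneg fun i hi => hf i (by simp at hi; omega)
  have hu : 0 ≤ u := sum_nonneg fun i hi => hf i (by simp at hi; omega)
  have hmean : (l : ℝ) * (t / l) = t :=
    mul_div_cancel_of_imp' fun hl => by simp [t, show l = 0 by exact_mod_cast hl]
  calc (∏ i ∈ range l, f i) ^ n * ∏ i ∈ Ico l (l + n), f i
      ≤ ((t / l) ^ l) ^ n * (u / n) ^ n := by
        gcongr
        · exact prod_nonneg fun i hi => hf i (by simp at hi; omega)
        · exact prod_nonneg fun i hi => hf i (by simp at hi; omega)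
    _ = ((t / l) ^ l * u / n) ^ n := by rw [← mul_pow, mul_div_assoc]
    _ ≤ (((t + u) / (l + 1)) ^ (l + 1) / n) ^ n := by
        gcongr
        simpa [hmean] using pow_mul_le_add_div_pow (div_nonneg ht l.cast_nonneg) hu l
    _ = (((∑ i ∈ range (l + n), f i) / (l + 1)) ^ (l + 1) / n) ^ n := by
        rw [← sum_range_add_sum_Ico _ (Nat.le_add_right l n)]

theorem prod_Ico_pow_le_prod_range_pow {f : ℕ → ℝ} {a l : ℕ} (hf : AntitoneOn f (Set.Iio l))
    (hf0 : ∀ i < l, 0 ≤ f i) (ha : a < l) :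
    (∏ i ∈ Ico a l, f i) ^ l ≤ (∏ i ∈ range l, f i) ^ (l - a) := by
  set Q := ∏ i ∈ Ico a l, f i
  set R := ∏ i ∈ range a, f i
  have hQ0 : 0 ≤ Q := prod_nonneg fun i hi => hf0 i (by simp at hi; omega)
  have hQ : Q ≤ f a ^ (l - a) := by
    calc Q ≤ ∏ _i ∈ Ico a l, f a :=
          prod_le_prod (fun i hi => hf0 i (by simp at hi; omega)) fun i hi => by
            simp only [mem_Ico] at hi
            exact hf ha (by simpa using hi.2) hi.1
      _ = f a ^ (l - a) := by simp
  have hR : f a ^ a ≤ R := by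
    calc f a ^ a = ∏ _i ∈ range a, f a := by simp
      _ ≤ R := prod_le_prod (fun _ _ => hf0 a ha) fun i hi => by
            simp only [mem_range] at hi
            exact hf (by simp; omega) ha hi.le
  calc Q ^ l = Q ^ a * Q ^ (l - a) := by rw [← pow_add, Nat.add_sub_cancel' ha.le]
    _ ≤ (f a ^ (l - a)) ^ a * Q ^ (l - a) := by gcongr
    _ = (f a ^ a) ^ (l - a) * Q ^ (l - a) := by rw [← pow_mul, ← pow_mul, Nat.mul_comm]
    _ ≤ R ^ (l - a) * Q ^ (l - a) := by gcongr; exact pow_nonneg (hf0 a ha) a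
    _ = (∏ i ∈ range l, f i) ^ (l - a) := by rw [← mul_pow, prod_range_mul_prod_Ico _ ha.le]

theorem le_rpow_div_of_pow_le_pow {x y : ℝ} {m N : ℕ} (hx : 0 ≤ x) (hy : 0 ≤ y) (hN : N ≠ 0)
    (h : x ^ N ≤ y ^ m) : x ≤ y ^ ((m : ℝ) / N) := by
  calc x = (x ^ N) ^ (N⁻¹ : ℝ) := (pow_rpow_inv_natCast hx hN).symm
    _ ≤ (y ^ m) ^ (N⁻¹ : ℝ) := by gcongr
    _ = y ^ ((m : ℝ) / N) := by rw [← rpow_natCast, ← rpow_mul hy, div_eq_mul_inv]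

theorem stmt10_general (d : ℕ) (lam : ℕ → ℝ)
    (hmono : ∀ i j, i ≤ j → j < d → lam j ≤ lam i)
    (hpos : ∀ i, i < d → 0 < lam i)
    (S P : ℝ) (hS : S = ∑ i ∈ Finset.range d, lam i)
    (hP : P = ∏ i ∈ Finset.range d, lam i)
    (k l : ℕ) (hk1 : 1 ≤ k) (hkl : k ≤ l) (hl : l ≤ d - 2) :
    ∏ i ∈ Finset.Ico (k - 1) l, lam i ≤
      ((1 / P) * ((1 / ((d : ℝ) - l)) * (S / ((l : ℝ) + 1)) ^ (l + 1)) ^ (d - l)) ^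
        (((l : ℝ) - k + 1) / ((l : ℝ) * ((d : ℝ) - l - 1))) := by
  obtain ⟨n, rfl⟩ : ∃ n, d = l + n := ⟨d - l, by omega⟩
  set Q := ∏ i ∈ Ico (k - 1) l, lam i
  set A := ∏ i ∈ range l, lam i
  set B := ∏ i ∈ Ico l (l + n), lam i
  set C := (S / (l + 1)) ^ (l + 1) / n
  have hQ : 0 < Q := prod_pos fun i hi => hpos i (by simp at hi; omega)
  have hA : 0 < A := prod_pos fun i hi => hpos i (by simp at hi; omega)
  have hPAB : P = A * B := by rw [hP, prod_range_mul_prod_Ico _ (Nat.le_add_right l n)]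
  have hP0 : 0 < P := hP ▸ prod_pos fun i hi => hpos i (by simpa using hi)
  have hS0 : 0 ≤ S := hS ▸ sum_nonneg fun i hi => (hpos i (by simpa using hi)).le
  have hblock : Q ^ l ≤ A ^ (l - (k - 1)) := prod_Ico_pow_le_prod_range_pow
    (fun i _ j hj hij => hmono i j hij (by simp at hj; omega)) (fun i hi => (hpos i (by omega)).le)
    (by omega)
  have hAB : A ^ n * B ≤ C ^ n := by
    simpa only [← hS] using prod_range_pow_mul_prod_Ico_le fun i hi => (hpos i hi).le
  have hAP : A ^ (n - 1) ≤ C ^ n / P := by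
    rwa [le_div_iff₀ hP0, hPAB, ← mul_assoc, ← pow_succ, Nat.sub_add_cancel (by omega)]
  have key : Q ^ (l * (n - 1)) ≤ (1 / P * C ^ n) ^ (l - (k - 1)) := by
    calc Q ^ (l * (n - 1)) = (Q ^ l) ^ (n - 1) := pow_mul _ _ _
      _ ≤ (A ^ (l - (k - 1))) ^ (n - 1) := by gcongr
      _ = (A ^ (n - 1)) ^ (l - (k - 1)) := by rw [← pow_mul, ← pow_mul, Nat.mul_comm]
      _ ≤ (1 / P * C ^ n) ^ (l - (k - 1)) := by rw [one_div_mul_eq_div]; gcongr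
  convert le_rpow_div_of_pow_le_pow hQ.le (by positivity)
    (Nat.mul_ne_zero (by omega) (by omega)) key using 2
  · simp only [C, Nat.add_sub_cancel_left, Nat.cast_add, add_sub_cancel_left]
    ring
  · push_cast [Nat.cast_sub hk1, Nat.cast_sub (by omega : k - 1 ≤ l),
      Nat.cast_sub (by omega : 1 ≤ n)]
    ring

theorem stmt10 (d : ℕ) (hd : 0 < d) (lam : ℕ → ℝ)
    (hmono : ∀ i j, i ≤ j → j < d → lam j ≤ lam i)
    (hpos : ∀ i, i < d → 0 < lam i)
    (S P : ℝ) (hS : S = ∑ i ∈ Finset.range d, lam i)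
    (hP : P = ∏ i ∈ Finset.range d, lam i)
    (k l : ℕ) (hk1 : 1 ≤ k) (hkl : k ≤ l) (hl : l ≤ d - 2) :
    ∏ i ∈ Finset.Ico (k - 1) l, lam i ≤
      ((1 / P) * ((1 / ((d : ℝ) - l)) * (S / ((l : ℝ) + 1)) ^ (l + 1)) ^ (d - l)) ^
        (((l : ℝ) - k + 1) / ((l : ℝ) * ((d : ℝ) - l - 1))) :=
  stmt10_general d lam hmono hpos S P hS hP k l hk1 hkl hl
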